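/- arXiv:2307.01808 — 5 statements merged into one kernel-verified Lean document; each statement's English description precedes it below -/
import Mathlib

section
/- Let E ⊆ ℂ be compact, let α be an interior point of E, and let D := {1/(z − α) : z ∈ ℂ ∖ E} ∪ {0}. Then the analytic capacity of E equals the supremum of |F′(0)| over all functions F : ℂ → ℂ that are holomorphic on D, satisfy ‖F(ζ)‖ ≤ 1 for every ζ ∈ D, and satisfy F(0) = 0; that is, γ(E) = sSup {‖deriv F 0‖ : F holomorphic on D, ‖F‖ ≤ 1 on D, F(0) = 0}. -/
open Filter Bornology

/-- `f` is admissible for the compact set `E` with limit `L` at infinity and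
derivative `c` at infinity: `f` is holomorphic on `ℂ \ E`, bounded by `1` there,
`f → L` and `z·(f z − L) → c` as `z → ∞`. -/
def Admissible (E : Set ℂ) (f : ℂ → ℂ) (L c : ℂ) : Prop :=
  DifferentiableOn ℂ f Eᶜ ∧ (∀ z ∈ Eᶜ, ‖f z‖ ≤ 1) ∧
    Tendsto f (cobounded ℂ) (nhds L) ∧
    Tendsto (fun z => z * (f z - L)) (cobounded ℂ) (nhds c)

/-- The analytic capacity of `E`: the supremum of `‖f′(∞)‖` over admissible `f`. -/
noncomputable def analyticCapacity (E : Set ℂ) : ℝ :=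
  sSup {r : ℝ | ∃ f L c, Admissible E f L c ∧ r = ‖c‖}

/-!
The substitution `ζ = 1 / (z - α)` turns an admissible `f` with limit `L` into
`G ζ = f (α + ζ⁻¹)`, extended by `G 0 = L`, which is holomorphic and bounded by `1` on `D`; the
condition `z (f z - L) → c` says precisely that the difference quotient of `G` at `0` tends to `c`,
so `G' 0 = f'(∞)`. Conversely `F ↦ F (1 / (z - α))` sends a function vanishing at `0` to an
admissible one with `f'(∞) = F' 0`. The normalisation `F 0 = 0` costs nothing: composing `G` with
the disk automorphism `w ↦ (w - L) / (1 - conj L * w)` multiplies `G' 0` by `1 / (1 - ‖L‖²) ≥ 1`,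
and if `‖L‖ = 1` the maximum modulus principle makes `G` constant.
-/

open Complex ComplexConjugate Function Set Topology

section DiskAutomorphism

variable {a w : ℂ}

noncomputable def diskAutomorphism (a w : ℂ) : ℂ := (w - a) / (1 - conj a * w)

lemma norm_sub_le_norm_one_sub_conj_mul (ha : ‖a‖ ≤ 1) (hw : ‖w‖ ≤ 1) :
    ‖w - a‖ ≤ ‖1 - conj a * w‖ := by
  have key : ‖1 - conj a * w‖ ^ 2 = ‖w - a‖ ^ 2 + (1 - ‖a‖ ^ 2) * (1 - ‖w‖ ^ 2) := by
    have : ((‖1 - conj a * w‖ ^ 2 : ℝ) : ℂ) =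
        ((‖w - a‖ ^ 2 + (1 - ‖a‖ ^ 2) * (1 - ‖w‖ ^ 2) : ℝ) : ℂ) := by
      push_cast
      simp only [← mul_conj', map_sub, map_mul, map_one, conj_conj]
      ring
    exact_mod_cast this
  have hprod : 0 ≤ (1 - ‖a‖ ^ 2) * (1 - ‖w‖ ^ 2) :=
    mul_nonneg (by nlinarith [norm_nonneg a]) (by nlinarith [norm_nonneg w])
  exact (pow_le_pow_iff_left₀ (norm_nonneg _) (norm_nonneg _) two_ne_zero).1 (by linarith)

lemma one_sub_conj_mul_ne_zero (ha : ‖a‖ < 1) (hw : ‖w‖ ≤ 1) : 1 - conj a * w ≠ 0 := by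
  rw [sub_ne_zero]
  intro h
  have : ‖conj a * w‖ < 1 := by
    rw [norm_mul, RCLike.norm_conj]
    nlinarith [norm_nonneg a, norm_nonneg w]
  rw [← h, norm_one] at this
  exact lt_irrefl _ this

lemma diskAutomorphism_self (a : ℂ) : diskAutomorphism a a = 0 := by
  simp [diskAutomorphism]

lemma norm_diskAutomorphism_le_one (ha : ‖a‖ < 1) (hw : ‖w‖ ≤ 1) :
    ‖diskAutomorphism a w‖ ≤ 1 := by
  rw [diskAutomorphism, norm_div, div_le_one (norm_pos_iff.2 (one_sub_conj_mul_ne_zero ha hw))]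
  exact norm_sub_le_norm_one_sub_conj_mul ha.le hw

lemma differentiableAt_diskAutomorphism (ha : ‖a‖ < 1) (hw : ‖w‖ ≤ 1) :
    DifferentiableAt ℂ (diskAutomorphism a) w :=
  (differentiableAt_id.sub_const a).div
    ((differentiableAt_const 1).sub ((differentiableAt_const _).mul differentiableAt_id))
    (one_sub_conj_mul_ne_zero ha hw)

lemma hasDerivAt_diskAutomorphism_self (ha : ‖a‖ < 1) :
    HasDerivAt (diskAutomorphism a) (1 - conj a * a)⁻¹ a := by
  have hne := one_sub_conj_mul_ne_zero ha ha.le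
  have h := ((hasDerivAt_id' a).sub_const a).div
    (((hasDerivAt_id' a).const_mul (conj a)).const_sub 1) hne
  rw [sub_self, zero_mul, sub_zero, one_mul, sq, div_mul_cancel_left₀ hne] at h
  exact h

lemma one_le_norm_deriv_diskAutomorphism_self (ha : ‖a‖ < 1) :
    1 ≤ ‖deriv (diskAutomorphism a) a‖ := by
  have hsq : ‖a‖ ^ 2 < 1 := by nlinarith [norm_nonneg a]
  rw [(hasDerivAt_diskAutomorphism_self ha).deriv, conj_mul', norm_inv,
    show (1 : ℂ) - (‖a‖ : ℂ) ^ 2 = ((1 - ‖a‖ ^ 2 : ℝ) : ℂ) by push_cast; ring,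
    norm_real, Real.norm_of_nonneg (by linarith)]
  exact one_le_inv₀ (by linarith) |>.2 (by linarith [sq_nonneg ‖a‖])

end DiskAutomorphism

lemma deriv_eq_zero_of_isLocalMax_norm {F : Type*} [NormedAddCommGroup F] [NormedSpace ℂ F]
    [StrictConvexSpace ℝ F] {G : ℂ → F} {p : ℂ}
    (hd : ∀ᶠ z in 𝓝 p, DifferentiableAt ℂ G z) (hmax : IsLocalMax (norm ∘ G) p) :
    deriv G p = 0 := by
  rw [Filter.EventuallyEq.deriv_eq (eventually_eq_of_isLocalMax_norm hd hmax), deriv_const]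

theorem exists_map_eq_zero_norm_deriv_le {D : Set ℂ} {p : ℂ} {G : ℂ → ℂ} (hD : IsOpen D)
    (hp : p ∈ D) (hG : DifferentiableOn ℂ G D) (hG1 : ∀ ζ ∈ D, ‖G ζ‖ ≤ 1) :
    ∃ F : ℂ → ℂ, DifferentiableOn ℂ F D ∧ (∀ ζ ∈ D, ‖F ζ‖ ≤ 1) ∧ F p = 0 ∧
      ‖deriv G p‖ ≤ ‖deriv F p‖ := by
  rcases (hG1 p hp).lt_or_eq with hlt | heq
  · refine ⟨diskAutomorphism (G p) ∘ G, fun ζ hζ => ?_,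
      fun ζ hζ => norm_diskAutomorphism_le_one hlt (hG1 ζ hζ), diskAutomorphism_self _, ?_⟩
    · exact (differentiableAt_diskAutomorphism hlt (hG1 ζ hζ)).comp_differentiableWithinAt ζ
        (hG ζ hζ)
    · rw [deriv_comp p (differentiableAt_diskAutomorphism hlt (hG1 p hp))
        (hG.differentiableAt (hD.mem_nhds hp)), norm_mul]
      exact le_mul_of_one_le_left (norm_nonneg _) (one_le_norm_deriv_diskAutomorphism_self hlt)
  · have hmax : IsLocalMax (norm ∘ G) p :=
      mem_of_superset (hD.mem_nhds hp) fun ζ hζ => (hG1 ζ hζ).trans heq.ge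
    have hd : ∀ᶠ z in 𝓝 p, DifferentiableAt ℂ G z :=
      eventually_of_mem (hD.mem_nhds hp) fun ζ hζ => hG.differentiableAt (hD.mem_nhds hζ)
    refine ⟨0, differentiableOn_const 0, fun _ _ => by simp, rfl, ?_⟩
    rw [deriv_eq_zero_of_isLocalMax_norm hd hmax, norm_zero]
    exact norm_nonneg _

section Inversion

variable {𝕜 : Type*} [NormedField 𝕜]

lemma tendsto_inv_sub_cobounded (α : 𝕜) :
    Tendsto (fun z => (z - α)⁻¹) (cobounded 𝕜) (𝓝[≠] 0) :=
  tendsto_inv₀_cobounded'.comp (tendsto_sub_const_cobounded α)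

lemma tendsto_add_inv_nhdsNE_zero (α : 𝕜) :
    Tendsto (fun ζ => α + ζ⁻¹) (𝓝[≠] 0) (cobounded 𝕜) :=
  (tendsto_const_add_cobounded α).comp tendsto_inv₀_nhdsNE_zero

-- Holds for every set because `0⁻¹ = 0` makes `z ↦ 1 / (z - α)` a bijection of `𝕜`, with
-- `α ↦ 0` and inverse `ζ ↦ α + ζ⁻¹`.
lemma image_one_div_sub_eq_preimage (α : 𝕜) :
    image (fun z => 1 / (z - α)) = preimage (fun ζ => α + ζ⁻¹) :=
  image_eq_preimage_of_inverse (fun z => by simp) (fun ζ => by simp)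

end Inversion

def inversionDomain (E : Set ℂ) (α : ℂ) : Set ℂ :=
  insert 0 ((fun ζ => α + ζ⁻¹) ⁻¹' Eᶜ)

lemma inversionDomain_eq (E : Set ℂ) (α : ℂ) :
    inversionDomain E α = (fun z : ℂ => 1 / (z - α)) '' Eᶜ ∪ {0} := by
  rw [union_singleton, image_one_div_sub_eq_preimage]
  rfl

lemma isOpen_inversionDomain {E : Set ℂ} (hE : IsCompact E) (α : ℂ) :
    IsOpen (inversionDomain E α) := by
  rw [isOpen_iff_mem_nhds]
  intro ζ hζ
  rcases eq_or_ne ζ 0 with rfl | hζ0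
  · exact insert_mem_nhds_iff.2 (tendsto_add_inv_nhdsNE_zero α hE.isBounded.compl)
  · refine mem_of_superset ?_ (subset_insert _ _)
    exact (continuousAt_const.add (continuousAt_inv₀ hζ0)).preimage_mem_nhds
      (hE.isClosed.isOpen_compl.mem_nhds (hζ.resolve_left hζ0))

lemma tendsto_mul_comp_inv_sub {𝕜 : Type*} [NontriviallyNormedField 𝕜] {F : 𝕜 → 𝕜} {d : 𝕜}
    (hF : HasDerivAt F d 0) (hF0 : F 0 = 0) (α : 𝕜) :
    Tendsto (fun z => z * F (z - α)⁻¹) (cobounded 𝕜) (𝓝 d) := by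
  have hslope : Tendsto (fun ζ => α * F ζ + slope F 0 ζ) (𝓝[≠] 0) (𝓝 d) := by
    simpa [hF0] using
      ((hF.continuousAt.tendsto.mono_left nhdsWithin_le_nhds).const_mul α).add hF.tendsto_slope
  refine (hslope.comp (tendsto_inv_sub_cobounded α)).congr fun z => ?_
  simp only [comp_apply, slope_def_field, hF0, sub_zero, div_inv_eq_mul]
  ring

variable {E : Set ℂ} {α : ℂ}

theorem admissible_comp_inv_sub (hE : IsCompact E) (hα : α ∈ E) {F : ℂ → ℂ}
    (hF : DifferentiableOn ℂ F (inversionDomain E α))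
    (hF1 : ∀ ζ ∈ inversionDomain E α, ‖F ζ‖ ≤ 1) (hF0 : F 0 = 0) :
    Admissible E (fun z => F (z - α)⁻¹) 0 (deriv F 0) := by
  have hD := isOpen_inversionDomain hE α
  have hmaps : ∀ z ∈ Eᶜ, (z - α)⁻¹ ∈ inversionDomain E α := fun z hz =>
    Or.inr (by simpa using hz)
  have hFd : HasDerivAt F (deriv F 0) 0 :=
    (hF.differentiableAt (hD.mem_nhds (mem_insert 0 _))).hasDerivAt
  refine ⟨fun z hz => ?_, fun z hz => hF1 _ (hmaps z hz), ?_,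
    by simpa using tendsto_mul_comp_inv_sub hFd hF0 α⟩
  · have hzα : z - α ≠ 0 := sub_ne_zero.2 fun h => hz (h ▸ hα)
    exact ((hF.differentiableAt (hD.mem_nhds (hmaps z hz))).comp z
      ((differentiableAt_id.sub_const α).inv hzα)).differentiableWithinAt
  · have := hFd.continuousAt.tendsto.comp
      ((tendsto_inv_sub_cobounded α).mono_right nhdsWithin_le_nhds)
    rwa [hF0] at this

namespace Admissible

variable {f : ℂ → ℂ} {L c : ℂ}

lemma hasDerivAt_update (hf : Admissible E f L c) (α : ℂ) :
    HasDerivAt (update (fun ζ => f (α + ζ⁻¹)) 0 L) c 0 := by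
  obtain ⟨-, -, hfL, hfc⟩ := hf
  have hlim : Tendsto (fun z => (z - α) * (f z - L)) (cobounded ℂ) (𝓝 c) := by
    simpa [sub_mul] using hfc.sub ((hfL.sub_const L).const_mul α)
  -- with `z = α + ζ⁻¹`, the slope of the extension at `0` is `(z - α) * (f z - L)`
  rw [hasDerivAt_iff_tendsto_slope]
  refine (hlim.comp (tendsto_add_inv_nhdsNE_zero α)).congr' ?_
  filter_upwards [self_mem_nhdsWithin] with ζ (hζ : ζ ≠ 0)
  simp [slope_def_field, hζ, div_eq_inv_mul]

lemma differentiableOn_update (hf : Admissible E f L c) (hE : IsClosed E) :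
    DifferentiableOn ℂ (update (fun ζ => f (α + ζ⁻¹)) 0 L) (inversionDomain E α) := by
  intro ζ hζ
  rcases eq_or_ne ζ 0 with rfl | hζ0
  · exact (hf.hasDerivAt_update α).differentiableAt.differentiableWithinAt
  · have hcomp : DifferentiableAt ℂ (fun ζ => f (α + ζ⁻¹)) ζ :=
      (hf.1.differentiableAt (hE.isOpen_compl.mem_nhds (hζ.resolve_left hζ0))).comp ζ
        ((differentiableAt_const α).add (differentiableAt_inv hζ0))
    refine (hcomp.congr_of_eventuallyEq ?_).differentiableWithinAt
    filter_upwards [isOpen_compl_singleton.mem_nhds hζ0] with w hw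
    exact update_of_ne hw _ _

lemma norm_update_le_one (hf : Admissible E f L c) (hE : IsBounded E) :
    ∀ ζ ∈ inversionDomain E α, ‖update (fun ζ => f (α + ζ⁻¹)) 0 L ζ‖ ≤ 1 := by
  intro ζ hζ
  rcases eq_or_ne ζ 0 with rfl | hζ0
  · rw [update_self]
    exact le_of_tendsto hf.2.2.1.norm (mem_of_superset hE.compl hf.2.1)
  · rw [update_of_ne hζ0]
    exact hf.2.1 _ (hζ.resolve_left hζ0)

theorem exists_le_norm_deriv (hf : Admissible E f L c) (hE : IsCompact E) (α : ℂ) :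
    ∃ F : ℂ → ℂ, DifferentiableOn ℂ F (inversionDomain E α) ∧
      (∀ ζ ∈ inversionDomain E α, ‖F ζ‖ ≤ 1) ∧ F 0 = 0 ∧ ‖c‖ ≤ ‖deriv F 0‖ := by
  have := exists_map_eq_zero_norm_deriv_le (isOpen_inversionDomain hE α) (mem_insert 0 _)
    (hf.differentiableOn_update hE.isClosed) (hf.norm_update_le_one hE.isBounded)
  rwa [(hf.hasDerivAt_update α).deriv] at this

end Admissible

/-- The analytic capacity of a compact set `E` equals the supremum of `‖F′(0)‖` over
functions `F` holomorphic on `D = M(ℂ \ E) ∪ {0}` (where `M z = 1/(z − α)` and `α` is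
an interior point of `E`), bounded by `1` on `D`, with `F 0 = 0`. -/
theorem analyticCapacity_eq_sSup_deriv (E : Set ℂ) (hE : IsCompact E) (α : ℂ)
    (hα : α ∈ interior E) (D : Set ℂ)
    (hD : D = ((fun z : ℂ => 1 / (z - α)) '' Eᶜ) ∪ {0}) :
    analyticCapacity E =
      sSup {r : ℝ | ∃ F : ℂ → ℂ, DifferentiableOn ℂ F D ∧ (∀ ζ ∈ D, ‖F ζ‖ ≤ 1) ∧
        F 0 = 0 ∧ r = ‖deriv F 0‖} := by
  rw [← inversionDomain_eq] at hD
  subst hD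
  refine csSup_eq_csSup_of_forall_exists_le ?_ ?_
  · rintro _ ⟨f, L, c, hf, rfl⟩
    obtain ⟨F, hF, hF1, hF0, hcF⟩ := hf.exists_le_norm_deriv hE α
    exact ⟨_, ⟨F, hF, hF1, hF0, rfl⟩, hcF⟩
  · rintro _ ⟨F, hF, hF1, hF0, rfl⟩
    exact ⟨_, ⟨_, 0, _, admissible_comp_inv_sub hE (interior_subset hα) hF hF1 hF0, rfl⟩, le_rfl⟩
end

section
/- Let K, K′ ⊆ ℂ be compact sets and let Φ : ℂ → ℂ be holomorphic on ℂ ∖ K, map ℂ ∖ K bijectively onto ℂ ∖ K′, and satisfy Φ(z) − z → 0 along the cobounded filter of ℂ (z → ∞). Then the analytic capacities coincide: γ(K) = γ(K′). -/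
open Filter Bornology

/-!
The inverse `ψ` of `Φ` is again a normalized conformal map, of `ℂ \ K'` onto `ℂ \ K`, and
composing an admissible `f` with a normalized map keeps it admissible with the same `f′(∞)`, since
`w (f (ψ w) - L) = ψ w (f (ψ w) - L) - (ψ w - w) (f (ψ w) - L)` and the last term tends to `0`.
Hence both capacities are the supremum of the same set.

That `ψ` is holomorphic follows from the open mapping theorem, which makes `ψ` continuous, and the
removable singularity theorem at the isolated critical points of `Φ`. That `ψ w - w → 0` reduces
to `ψ w → ∞`, which is a connectedness argument on the exterior of a large disc.
-/

open Metric Set Topology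

section InverseMap

variable {Φ ψ : ℂ → ℂ} {U V : Set ℂ}

lemma not_eventually_eq_of_injOn (hU : IsOpen U) (hinj : InjOn Φ U) {z : ℂ} (hz : z ∈ U) :
    ¬∀ᶠ z' in 𝓝 z, Φ z' = Φ z := by
  intro hconst
  obtain ⟨z', ⟨hz'Φ, hz'U⟩, hne : z' ≠ z⟩ :=
    ((eventually_nhdsWithin_of_eventually_nhds (s := {z}ᶜ) (hconst.and (hU.mem_nhds hz))).and
      eventually_mem_nhdsWithin).exists
  exact hne (hinj hz'U hz hz'Φ)

lemma nhds_le_map_nhds_of_injOn (hU : IsOpen U) (hΦ : DifferentiableOn ℂ Φ U)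
    (hinj : InjOn Φ U) {z : ℂ} (hz : z ∈ U) : 𝓝 (Φ z) ≤ map Φ (𝓝 z) :=
  (hΦ.analyticAt (hU.mem_nhds hz)).eventually_constant_or_nhds_le_map_nhds.resolve_left
    (not_eventually_eq_of_injOn hU hinj hz)

lemma isOpen_image_of_injOn (hU : IsOpen U) (hΦ : DifferentiableOn ℂ Φ U) (hinj : InjOn Φ U) :
    IsOpen (Φ '' U) := by
  rw [isOpen_iff_mem_nhds]
  rintro _ ⟨z, hz, rfl⟩
  exact nhds_le_map_nhds_of_injOn hU hΦ hinj hz (image_mem_map (hU.mem_nhds hz))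

lemma continuousAt_of_leftInvOn (hU : IsOpen U) (hΦ : DifferentiableOn ℂ Φ U)
    (hinj : InjOn Φ U) (hψ : LeftInvOn ψ Φ U) {z : ℂ} (hz : z ∈ U) :
    ContinuousAt ψ (Φ z) :=
  calc map ψ (𝓝 (Φ z))
      ≤ map ψ (map Φ (𝓝 z)) := map_mono (nhds_le_map_nhds_of_injOn hU hΦ hinj hz)
    _ = map id (𝓝 z) := by
      rw [map_map]
      exact map_congr (eventuallyEq_of_mem (hU.mem_nhds hz) hψ.eqOn)
    _ = 𝓝 (ψ (Φ z)) := by rw [map_id, hψ hz]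

lemma eventually_deriv_ne_zero_of_injOn (hU : IsOpen U) (hΦ : DifferentiableOn ℂ Φ U)
    (hinj : InjOn Φ U) {z : ℂ} (hz : z ∈ U) : ∀ᶠ z' in 𝓝[≠] z, deriv Φ z' ≠ 0 := by
  refine (hΦ.analyticAt (hU.mem_nhds hz)).deriv.eventually_eq_zero_or_eventually_ne_zero
    |>.resolve_left fun hzero => not_eventually_eq_of_injOn hU hinj hz ?_
  obtain ⟨ε, hε, hball⟩ := Metric.mem_nhds_iff.1 (hzero.and (hU.mem_nhds hz))
  filter_upwards [ball_mem_nhds z hε] with z' hz'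
  exact isOpen_ball.is_const_of_deriv_eq_zero (convex_ball z ε).isPreconnected
    (hΦ.mono fun y hy => (hball hy).2) (fun y hy => (hball hy).1) hz' (mem_ball_self hε)

lemma differentiableAt_of_leftInvOn (hU : IsOpen U) (hΦ : DifferentiableOn ℂ Φ U)
    (hψ : LeftInvOn ψ Φ U) {z : ℂ} (hz : z ∈ U) (hz' : deriv Φ z ≠ 0) :
    DifferentiableAt ℂ ψ (Φ z) :=
  ((hΦ.analyticAt (hU.mem_nhds hz)).hasStrictDerivAt.to_local_left_inverse hz'
    (eventually_of_mem (hU.mem_nhds hz) hψ)).hasDerivAt.differentiableAt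

theorem differentiableOn_of_invOn (hU : IsOpen U) (hΦ : DifferentiableOn ℂ Φ U)
    (hbij : BijOn Φ U V) (hinv : InvOn ψ Φ U V) : DifferentiableOn ℂ ψ V := by
  have hψbij : BijOn ψ V U := hbij.symm hinv.symm
  have hV : IsOpen V := hbij.image_eq ▸ isOpen_image_of_injOn hU hΦ hbij.injOn
  intro w hw
  suffices DifferentiableAt ℂ ψ w from this.differentiableWithinAt
  have hz : ψ w ∈ U := hψbij.mapsTo hw
  have hcont : ContinuousAt ψ w :=
    hinv.2 hw ▸ continuousAt_of_leftInvOn hU hΦ hbij.injOn hinv.1 hz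
  have hpunct : Tendsto ψ (𝓝[≠] w) (𝓝[≠] ψ w) := by
    refine tendsto_nhdsWithin_iff.2 ⟨hcont.mono_left nhdsWithin_le_nhds, ?_⟩
    filter_upwards [self_mem_nhdsWithin, eventually_nhdsWithin_of_eventually_nhds (hV.mem_nhds hw)]
      with w' hw'w hw'V using fun h => hw'w (hψbij.injOn hw'V hw h)
  refine (Complex.analyticAt_of_differentiable_on_punctured_nhds_of_continuousAt ?_
    hcont).differentiableAt
  filter_upwards [hpunct.eventually (eventually_deriv_ne_zero_of_injOn hU hΦ hbij.injOn hz),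
    eventually_nhdsWithin_of_eventually_nhds (hV.mem_nhds hw)] with w' hd hw'V
  simpa only [hinv.2 hw'V] using
    differentiableAt_of_leftInvOn hU hΦ hinv.1 (hψbij.mapsTo hw'V) hd

end InverseMap

lemma isPreconnected_setOf_lt_norm {M : ℝ} (hM : 0 < M) :
    IsPreconnected {w : ℂ | M < ‖w‖} := by
  have hexp : Complex.exp '' {z | Real.log M < z.re} = {w : ℂ | M < ‖w‖} := by
    ext w
    constructor
    · rintro ⟨z, hz, rfl⟩
      simpa only [mem_ofPred_eq, Complex.norm_exp] using (Real.log_lt_iff_lt_exp hM).1 hz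
    · intro hw
      have hw0 : w ≠ 0 := by
        rintro rfl
        simp only [mem_ofPred_eq, norm_zero] at hw
        linarith
      refine ⟨Complex.log w, ?_, Complex.exp_log hw0⟩
      simpa only [mem_ofPred_eq, Complex.log_re] using Real.log_lt_log hM hw
  exact hexp ▸
    (convex_halfSpace_re_gt _).isPreconnected.image _ Complex.continuous_exp.continuousOn

lemma tendsto_cobounded_of_tendsto_sub_nhds_zero {Φ : ℂ → ℂ}
    (hΦ : Tendsto (fun z => Φ z - z) (cobounded ℂ) (𝓝 0)) :
    Tendsto Φ (cobounded ℂ) (cobounded ℂ) := by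
  rw [← tendsto_norm_atTop_iff_cobounded]
  refine tendsto_atTop_mono' _ ?_
    (tendsto_atTop_add_const_right _ (-1) tendsto_norm_cobounded_atTop)
  filter_upwards [hΦ.eventually (closedBall_mem_nhds (0 : ℂ) one_pos)] with z hz
  rw [dist_zero_right] at hz
  linarith [norm_sub_norm_le z (Φ z), norm_sub_rev z (Φ z)]

/-- The exterior of a large disc is connected and covered by the disjoint open images of the
inner and the outer part of `Kᶜ`; the inner image misses it because `Φ` is bounded on the
separating circle. -/
lemma eventually_cobounded_mem_image_setOf_lt_norm {K : Set ℂ} {Φ : ℂ → ℂ} (hK : IsCompact K)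
    (hΦ : DifferentiableOn ℂ Φ Kᶜ) (hinj : InjOn Φ Kᶜ) (hsurj : ∀ᶠ w in cobounded ℂ, w ∈ Φ '' Kᶜ)
    (hΦ_tendsto : Tendsto Φ (cobounded ℂ) (cobounded ℂ))
    (r : ℝ) : ∀ᶠ w in cobounded ℂ, w ∈ Φ '' (Kᶜ ∩ {z | r < ‖z‖}) := by
  obtain ⟨R, hrR, hKR⟩ : ∃ R, r ≤ R ∧ ∀ z, R < ‖z‖ → z ∈ Kᶜ := by
    obtain ⟨R₀, hKR₀⟩ := hK.isBounded.subset_closedBall 0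
    refine ⟨max r R₀, le_max_left _ _, fun z hz hzK => ?_⟩
    linarith [mem_closedBall_zero_iff.1 (hKR₀ hzK), le_max_right r R₀]
  set inner := Kᶜ ∩ ball 0 (R + 1)
  set outer := {z : ℂ | R + 1 < ‖z‖}
  have houter : outer ⊆ Kᶜ := fun z hz => hKR z ((lt_add_one R).trans hz)
  have hsphere : sphere (0 : ℂ) (R + 1) ⊆ Kᶜ := fun z hz => hKR z (by simp_all)
  obtain ⟨M₀, hM₀⟩ := ((isCompact_sphere (0 : ℂ) (R + 1)).image_of_continuousOn
    (hΦ.continuousOn.mono hsphere)).isBounded.exists_norm_le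
  obtain ⟨M₁, -, hM₁⟩ := hasBasis_cobounded_norm.eventually_iff.1 hsurj
  set M := max M₁ (max M₀ 0 + 1)
  have hM₀M : M₀ < M := by grind
  set A := {w : ℂ | M < ‖w‖}
  have hA_cover : A ⊆ Φ '' inner ∪ Φ '' outer := by
    intro w hw
    obtain ⟨z, hz, rfl⟩ := hM₁ (show M₁ ≤ ‖w‖ from (le_max_left _ _).trans hw.le)
    rcases lt_trichotomy ‖z‖ (R + 1) with h | h | h
    · exact Or.inl ⟨z, ⟨hz, mem_ball_zero_iff.2 h⟩, rfl⟩
    · have := hM₀ _ (mem_image_of_mem Φ (mem_sphere_zero_iff_norm.2 h))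
      exact absurd hw (by simp only [A, mem_ofPred_eq]; linarith)
    · exact Or.inr ⟨z, h, rfl⟩
  have hdisj : Disjoint (Φ '' inner) (Φ '' outer) := by
    rw [disjoint_iff_inter_eq_empty, ← hinj.image_inter inter_subset_left houter, image_eq_empty]
    exact eq_empty_of_forall_notMem fun z ⟨⟨_, hz_inner⟩, hz_outer⟩ =>
      lt_asymm (mem_ball_zero_iff.1 hz_inner) hz_outer
  have hmeet : (A ∩ Φ '' outer).Nonempty := by
    obtain ⟨z, hzA, hz⟩ :=
      ((hΦ_tendsto.eventually (tendsto_norm_cobounded_atTop.eventually_gt_atTop M)).and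
        (tendsto_norm_cobounded_atTop.eventually_gt_atTop (R + 1))).exists
    exact ⟨Φ z, hzA, z, hz, rfl⟩
  have hA_outer : A ⊆ Φ '' outer :=
    (isPreconnected_setOf_lt_norm (by grind)).subset_right_of_subset_union
      (isOpen_image_of_injOn (hK.isClosed.isOpen_compl.inter isOpen_ball)
        (hΦ.mono inter_subset_left) (hinj.mono inter_subset_left))
      (isOpen_image_of_injOn (isOpen_lt continuous_const continuous_norm) (hΦ.mono houter)
        (hinj.mono houter)) hdisj hA_cover hmeet
  filter_upwards [tendsto_norm_cobounded_atTop.eventually_gt_atTop M] with w hw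
  obtain ⟨z, hz, rfl⟩ := hA_outer hw
  exact ⟨z, ⟨houter hz, hrR.trans_lt ((lt_add_one R).trans hz)⟩, rfl⟩

lemma tendsto_sub_nhds_zero_of_invOn {K K' : Set ℂ} {Φ ψ : ℂ → ℂ} (hK : IsCompact K)
    (hK' : IsBounded K') (hΦ : DifferentiableOn ℂ Φ Kᶜ) (hbij : BijOn Φ Kᶜ K'ᶜ)
    (hinv : InvOn ψ Φ Kᶜ K'ᶜ) (hnorm : Tendsto (fun z => Φ z - z) (cobounded ℂ) (𝓝 0)) :
    Tendsto (fun w => ψ w - w) (cobounded ℂ) (𝓝 0) := by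
  have hK'c : ∀ᶠ w in cobounded ℂ, w ∈ K'ᶜ := isBounded_def.1 hK'
  have hψ_tendsto : Tendsto ψ (cobounded ℂ) (cobounded ℂ) := by
    rw [← tendsto_norm_atTop_iff_cobounded, Filter.tendsto_atTop]
    intro r
    filter_upwards [eventually_cobounded_mem_image_setOf_lt_norm hK hΦ hbij.injOn
      (hbij.image_eq ▸ hK'c) (tendsto_cobounded_of_tendsto_sub_nhds_zero hnorm) r]
      with _ ⟨z, ⟨hzK, hzr⟩, hzw⟩
    rw [← hzw, hinv.1 hzK]
    exact hzr.le
  have hneg := (hnorm.comp hψ_tendsto).neg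
  rw [neg_zero] at hneg
  refine hneg.congr' ?_
  filter_upwards [hK'c] with w hw
  simp [hinv.2 hw]

lemma Admissible.comp {E F : Set ℂ} {f ψ : ℂ → ℂ} {L c : ℂ} (hf : Admissible E f L c)
    (hψ : DifferentiableOn ℂ ψ Fᶜ) (hmaps : MapsTo ψ Fᶜ Eᶜ)
    (hnorm : Tendsto (fun w => ψ w - w) (cobounded ℂ) (𝓝 0)) :
    Admissible F (f ∘ ψ) L c := by
  obtain ⟨hfd, hf_le, hL, hc⟩ := hf
  have hψ_tendsto := tendsto_cobounded_of_tendsto_sub_nhds_zero hnorm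
  refine ⟨hfd.comp hψ hmaps, fun w hw => hf_le _ (hmaps hw), hL.comp hψ_tendsto, ?_⟩
  have hcorr : Tendsto (fun w => (ψ w - w) * (f (ψ w) - L)) (cobounded ℂ) (𝓝 0) := by
    simpa using hnorm.mul ((hL.comp hψ_tendsto).sub_const L)
  convert (hc.comp hψ_tendsto).sub hcorr using 2 with w
  · simp only [Function.comp_apply]
    ring
  · simp

lemma setOf_admissible_subset {E F : Set ℂ} {ψ : ℂ → ℂ}
    (hψ : DifferentiableOn ℂ ψ Fᶜ) (hmaps : MapsTo ψ Fᶜ Eᶜ)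
    (hnorm : Tendsto (fun w => ψ w - w) (cobounded ℂ) (𝓝 0)) :
    {r : ℝ | ∃ f L c, Admissible E f L c ∧ r = ‖c‖} ⊆
      {r : ℝ | ∃ f L c, Admissible F f L c ∧ r = ‖c‖} := by
  rintro _ ⟨f, L, c, hf, rfl⟩
  exact ⟨f ∘ ψ, L, c, hf.comp hψ hmaps hnorm, rfl⟩

theorem analyticCapacity_eq_of_mapsTo {E F : Set ℂ} {Φ ψ : ℂ → ℂ}
    (hΦ : DifferentiableOn ℂ Φ Eᶜ) (hΦ_maps : MapsTo Φ Eᶜ Fᶜ)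
    (hΦ_norm : Tendsto (fun z => Φ z - z) (cobounded ℂ) (𝓝 0))
    (hψ : DifferentiableOn ℂ ψ Fᶜ) (hψ_maps : MapsTo ψ Fᶜ Eᶜ)
    (hψ_norm : Tendsto (fun w => ψ w - w) (cobounded ℂ) (𝓝 0)) :
    analyticCapacity E = analyticCapacity F :=
  congrArg sSup <| Subset.antisymm (setOf_admissible_subset hψ hψ_maps hψ_norm)
    (setOf_admissible_subset hΦ hΦ_maps hΦ_norm)

/-- Analytic capacity is invariant under a conformal map `Φ` of `ℂ \ K` onto `ℂ \ K'`
normalized by `Φ(z) = z + O(1/z)` near infinity. -/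
theorem analyticCapacity_conformal_invariance (K K' : Set ℂ)
    (hK : IsCompact K) (hK' : IsCompact K') (Φ : ℂ → ℂ)
    (hΦ : DifferentiableOn ℂ Φ Kᶜ) (hbij : Set.BijOn Φ Kᶜ K'ᶜ)
    (hnorm : Tendsto (fun z => Φ z - z) (cobounded ℂ) (nhds 0)) :
    analyticCapacity K = analyticCapacity K' := by
  have hinv := hbij.invOn_invFunOn
  exact analyticCapacity_eq_of_mapsTo hΦ hbij.mapsTo hnorm
    (differentiableOn_of_invOn hK.isClosed.isOpen_compl hΦ hbij hinv) (hbij.symm hinv.symm).mapsTo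
    (tendsto_sub_nhds_zero_of_invOn hK hK'.isBounded hΦ hbij hinv hnorm)
end

section
/- For a, b ∈ ℂ with a ≠ b and nonzero u, v ∈ ℂ, define the Kerzman–Stein kernel A(a, b; u, v) := conj( u / (2πi·‖u‖·(a − b)) ) − v / (2πi·‖v‖·(b − a)). Let α ∈ ℂ and let a, b, u, v ∈ ℂ satisfy a ≠ b, a ≠ α, b ≠ α, u ≠ 0, v ≠ 0. Then the following Möbius transformation identity holds: A( 1/(a−α), 1/(b−α); −u/(a−α)², −v/(b−α)² ) · ( u·(b−α)·‖v‖ ) / ( v·(a−α)·‖b−α‖² ) = ‖u‖ · conj( A(a, b; u, v) ). -/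
/-!
Write `A = a - α`, `B = b - α`. The Möbius map sends `a - b` to `(b - a) / (A B)` and multiplies
the unit tangent `u / ‖u‖` by `-conj A / A`, so each Cauchy term `t / (2πi (a - b))` of the kernel
picks up the factor `conj A · B`, and the whole kernel the factor `A · conj B`. What remains is
`A(a,b;u,v) · u/‖u‖ = conj (A(a,b;u,v)) · v/‖v‖`, which holds because unit tangents satisfy
`conj t = t⁻¹`.
-/

open Complex

/-- The Kerzman–Stein kernel at points `a, b` with tangent vectors `u, v`:
`A(a,b;u,v) = conj( u / (2πi‖u‖(a−b)) ) − v / (2πi‖v‖(b−a))`. -/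
noncomputable def ksKernel (a b u v : ℂ) : ℂ :=
  starRingEnd ℂ (u / (2 * Real.pi * Complex.I * (‖u‖ : ℂ) * (a - b))) -
    v / (2 * Real.pi * Complex.I * (‖v‖ : ℂ) * (b - a))

open ComplexConjugate

noncomputable def cauchyTerm (a b u : ℂ) : ℂ :=
  u / (2 * Real.pi * I * ‖u‖ * (a - b))

theorem ksKernel_eq_cauchyTerm (a b u v : ℂ) :
    ksKernel a b u v = conj (cauchyTerm a b u) - cauchyTerm b a v :=
  rfl

theorem cauchyTerm_mobius (α a b u : ℂ) (ha : a ≠ α) (hb : b ≠ α) :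
    cauchyTerm (1 / (a - α)) (1 / (b - α)) (-u / (a - α) ^ 2) =
      conj (a - α) * (b - α) * cauchyTerm a b u := by
  have hA : a - α ≠ 0 := sub_ne_zero.mpr ha
  have hB : b - α ≠ 0 := sub_ne_zero.mpr hb
  rw [cauchyTerm, cauchyTerm, norm_div, norm_neg, norm_pow, ofReal_div, ofReal_pow, ← mul_conj',
    ← sub_sub_sub_cancel_right a b α]
  generalize a - α = A at *
  generalize b - α = B at *
  rw [← neg_sub B A, mul_neg, div_neg]
  field_simp

theorem ksKernel_mobius_eq (α a b u v : ℂ) (ha : a ≠ α) (hb : b ≠ α) :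
    ksKernel (1 / (a - α)) (1 / (b - α)) (-u / (a - α) ^ 2) (-v / (b - α) ^ 2) =
      (a - α) * conj (b - α) * ksKernel a b u v := by
  simp only [ksKernel_eq_cauchyTerm, cauchyTerm_mobius α a b u ha hb,
    cauchyTerm_mobius α b a v hb ha, map_mul, conj_conj]
  ring

theorem ksKernel_mul_mul_norm_eq_norm_mul_mul_conj (a b u v : ℂ) :
    ksKernel a b u v * u * ‖v‖ = ‖u‖ * v * conj (ksKernel a b u v) := by
  rcases eq_or_ne u 0 with rfl | hu
  · simp [ksKernel]
  rcases eq_or_ne v 0 with rfl | hv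
  · simp [ksKernel]
  rcases eq_or_ne (a - b) 0 with hab | hab
  · simp [ksKernel, hab, ← neg_sub a b]
  have hcu : conj u = ‖u‖ ^ 2 / u := by rw [eq_div_iff hu, mul_comm, mul_conj']
  have hcv : conj v = ‖v‖ ^ 2 / v := by rw [eq_div_iff hv, mul_comm, mul_conj']
  have hcab : conj (a - b) ≠ 0 := (map_ne_zero _).mpr hab
  have hnu : (‖u‖ : ℂ) ≠ 0 := by simpa using hu
  have hnv : (‖v‖ : ℂ) ≠ 0 := by simpa using hv
  simp only [ksKernel, ← neg_sub a b, map_sub, map_div₀, map_mul, map_neg, conj_conj, conj_ofReal,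
    conj_I, map_ofNat]
  generalize a - b = w at *
  rw [hcu, hcv]
  field_simp
  ring

theorem ksKernel_mobius_general (α a b u v : ℂ) (ha : a ≠ α) (hb : b ≠ α) (hv : v ≠ 0) :
    ksKernel (1 / (a - α)) (1 / (b - α)) (-u / (a - α) ^ 2) (-v / (b - α) ^ 2) *
        (u * (b - α) * (‖v‖ : ℂ)) / (v * (a - α) * ((‖b - α‖ : ℂ)) ^ 2) =
      (‖u‖ : ℂ) * starRingEnd ℂ (ksKernel a b u v) := by
  have hA : a - α ≠ 0 := sub_ne_zero.mpr ha
  have hB : b - α ≠ 0 := sub_ne_zero.mpr hb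
  have hB' : conj (b - α) ≠ 0 := (map_ne_zero _).mpr hB
  rw [ksKernel_mobius_eq α a b u v ha hb, ← mul_conj',
    div_eq_iff (mul_ne_zero (mul_ne_zero hv hA) (mul_ne_zero hB hB'))]
  linear_combination
    (a - α) * (b - α) * conj (b - α) * ksKernel_mul_mul_norm_eq_norm_mul_mul_conj a b u v

/-- Transformation identity for the Kerzman–Stein kernel under the Möbius map
`M(z) = 1/(z−α)` (with tangent vectors transformed by `M′(z) = −1/(z−α)²`). -/
theorem ksKernel_mobius (α a b u v : ℂ) (hab : a ≠ b) (ha : a ≠ α) (hb : b ≠ α)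
    (hu : u ≠ 0) (hv : v ≠ 0) :
    ksKernel (1 / (a - α)) (1 / (b - α)) (-u / (a - α) ^ 2) (-v / (b - α) ^ 2) *
        (u * (b - α) * (‖v‖ : ℂ)) / (v * (a - α) * ((‖b - α‖ : ℂ)) ^ 2) =
      (‖u‖ : ℂ) * starRingEnd ℂ (ksKernel a b u v) :=
  ksKernel_mobius_general α a b u v ha hb hv
end

section
/- Let m ≥ 1, α ∈ ℂ, and for j = 1,…,m let ζ_j : ℝ → ℂ be continuously differentiable and 2π-periodic with ζ_j(t) ≠ α and ζ_j′(t) ≠ 0 for all t, and with ζ_j(t) ≠ ζ_k(s) whenever (j, t mod 2π) ≠ (k, s mod 2π). Put η_j(t) := 1/(ζ_j(t) − α), so η_j′(t) = −ζ_j′(t)/(ζ_j(t) − α)². Suppose continuous functions S_j : [0, 2π] → ℂ satisfy, for every j and every t ∈ [0, 2π], the Kerzman–Stein integral equation S_j(t) + Σ_{k=1}^{m} ∫₀^{2π} A(η_j(t), η_k(s); η_j′(t), η_k′(s)) · S_k(s) · ‖η_k′(s)‖ ds = conj( η_j′(t) / (2πi · ‖η_j′(t)‖ · η_j(t)) ).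 Define ψ_j(t) := i · conj( S_j(t) · η_j′(t) / η_j(t) ) / ‖ζ_j′(t)‖. Then for every j and every t ∈ [0, 2π], ψ_j(t) + Σ_{k=1}^{m} ∫₀^{2π} A(ζ_j(t), ζ_k(s); ζ_j′(t), ζ_k′(s)) · ψ_k(s) · ‖ζ_k′(s)‖ ds = 1/(2π). -/
open Complex

theorem ksKernel_sub_const (a b u v c : ℂ) :
    ksKernel (a - c) (b - c) u v = ksKernel a b u v := by
  simp only [ksKernel, sub_sub_sub_cancel_right]

theorem conj_ksKernel_mul (a b : ℂ) {u v : ℂ} (hu : u ≠ 0) (hv : v ≠ 0) :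
    starRingEnd ℂ (ksKernel a b u v * u) / ‖u‖ = ksKernel a b u v * starRingEnd ℂ v / ‖v‖ := by
  rcases eq_or_ne a b with rfl | hab
  · simp [ksKernel]
  have hu' : (‖u‖ : ℂ) ≠ 0 := by simpa using hu
  have hv' : (‖v‖ : ℂ) ≠ 0 := by simpa using hv
  have hpi : (Real.pi : ℂ) ≠ 0 := by exact_mod_cast Real.pi_ne_zero
  have hcab : starRingEnd ℂ (a - b) ≠ 0 := (map_ne_zero _).mpr (sub_ne_zero.mpr hab)
  have hcba : starRingEnd ℂ (b - a) ≠ 0 := (map_ne_zero _).mpr (sub_ne_zero.mpr hab.symm)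
  have hnu := mul_conj' u
  have hnv := mul_conj' v
  simp only [ksKernel, map_mul, map_div₀, map_sub, map_neg, conj_conj, conj_I, conj_ofReal,
    map_ofNat] at hcab hcba ⊢
  field_simp
  linear_combination (a - b) * (starRingEnd ℂ a - starRingEnd ℂ b) ^ 2 *
    ((‖v‖ : ℂ) ^ 2 * hnu - (‖u‖ : ℂ) ^ 2 * hnv)

theorem norm_neg_div_sq (w p : ℂ) : (‖-w / p ^ 2‖ : ℂ) = ‖w‖ / (p * starRingEnd ℂ p) := by
  rw [mul_conj', norm_div, norm_neg, norm_pow]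
  push_cast
  rfl

/-- The common shape `w / (2πi‖w‖(p − q))` of both halves of `ksKernel`, under inversion. -/
theorem neg_div_sq_div_inv_sub_inv {p q : ℂ} (hp : p ≠ 0) (hq : q ≠ 0) (w : ℂ) :
    -w / p ^ 2 / (2 * Real.pi * I * ‖-w / p ^ 2‖ * (p⁻¹ - q⁻¹)) =
      starRingEnd ℂ p * q * (w / (2 * Real.pi * I * ‖w‖ * (p - q))) := by
  rcases eq_or_ne w 0 with rfl | hw
  · simp
  rcases eq_or_ne p q with rfl | hpq
  · simp
  have hw' : (‖w‖ : ℂ) ≠ 0 := by simpa using hw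
  have hpi : (Real.pi : ℂ) ≠ 0 := by exact_mod_cast Real.pi_ne_zero
  have hpq' : p - q ≠ 0 := sub_ne_zero.mpr hpq
  rw [norm_neg_div_sq]
  field_simp
  ring

theorem ksKernel_inv {d e : ℂ} (hd : d ≠ 0) (he : e ≠ 0) (u v : ℂ) :
    ksKernel d⁻¹ e⁻¹ (-u / d ^ 2) (-v / e ^ 2) = d * starRingEnd ℂ e * ksKernel d e u v := by
  simp only [ksKernel, neg_div_sq_div_inv_sub_inv hd he, neg_div_sq_div_inv_sub_inv he hd,
    map_mul, conj_conj]
  ring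

/-- `ψ = moebiusWeight (ζ − α) ζ′ · conj S`, because `η′/η = −ζ′/(ζ − α)`. -/
noncomputable def moebiusWeight (d u : ℂ) : ℂ :=
  I * starRingEnd ℂ (-u / d) / ‖u‖

theorem ksKernel_mul_moebiusWeight {d e u v : ℂ} (hd : d ≠ 0) (he : e ≠ 0) (hu : u ≠ 0)
    (hv : v ≠ 0) :
    ksKernel d e u v * moebiusWeight e v * ‖v‖ =
      moebiusWeight d u *
        starRingEnd ℂ (ksKernel d⁻¹ e⁻¹ (-u / d ^ 2) (-v / e ^ 2) * ‖-v / e ^ 2‖) := by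
  have hu' : (‖u‖ : ℂ) ≠ 0 := by simpa using hu
  have hv' : (‖v‖ : ℂ) ≠ 0 := by simpa using hv
  have hcd : starRingEnd ℂ d ≠ 0 := (map_ne_zero _).mpr hd
  have hce : starRingEnd ℂ e ≠ 0 := (map_ne_zero _).mpr he
  have hconj := conj_ksKernel_mul d e hu hv
  rw [ksKernel_inv hd he, norm_neg_div_sq]
  simp only [moebiusWeight, map_mul, map_div₀, map_neg, conj_conj, conj_ofReal] at hconj ⊢
  field_simp
  rw [div_eq_div_iff hu' hv'] at hconj
  linear_combination hconj

theorem moebiusWeight_mul_rhs {d u : ℂ} (hd : d ≠ 0) (hu : u ≠ 0) :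
    moebiusWeight d u * (-u / d ^ 2 / (2 * Real.pi * I * ‖-u / d ^ 2‖ * d⁻¹)) =
      1 / (2 * Real.pi) := by
  have hu' : (‖u‖ : ℂ) ≠ 0 := by simpa using hu
  have hpi : (Real.pi : ℂ) ≠ 0 := by exact_mod_cast Real.pi_ne_zero
  have hcd : starRingEnd ℂ d ≠ 0 := (map_ne_zero _).mpr hd
  have hnu := mul_conj' u
  rw [norm_neg_div_sq]
  simp only [moebiusWeight, map_div₀, map_neg]
  field_simp
  linear_combination hnu

theorem ksKernel_integral_equation_transform_general (m : ℕ) (α : ℂ)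
    (ζ : Fin m → ℝ → ℂ)
    (hα : ∀ j t, ζ j t ≠ α)
    (hreg : ∀ j t, deriv (ζ j) t ≠ 0)
    (η η' : Fin m → ℝ → ℂ)
    (hη : ∀ j t, η j t = 1 / (ζ j t - α))
    (hη' : ∀ j t, η' j t = -(deriv (ζ j) t) / (ζ j t - α) ^ 2)
    (S : Fin m → ℝ → ℂ)
    (hS : ∀ j, ∀ t ∈ Set.Icc (0 : ℝ) (2 * Real.pi),
      S j t + ∑ k, ∫ s in (0 : ℝ)..(2 * Real.pi),
          ksKernel (η j t) (η k s) (η' j t) (η' k s) * S k s * (‖η' k s‖ : ℂ)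
        = starRingEnd ℂ (η' j t /
            (2 * Real.pi * Complex.I * (‖η' j t‖ : ℂ) * η j t)))
    (ψ : Fin m → ℝ → ℂ)
    (hψ : ∀ j t, ψ j t =
      Complex.I * starRingEnd ℂ (S j t * η' j t / η j t) / (‖deriv (ζ j) t‖ : ℂ)) :
    ∀ j, ∀ t ∈ Set.Icc (0 : ℝ) (2 * Real.pi),
      ψ j t + ∑ k, ∫ s in (0 : ℝ)..(2 * Real.pi),
          ksKernel (ζ j t) (ζ k s) (deriv (ζ j) t) (deriv (ζ k) s) * ψ k s *
            (‖deriv (ζ k) s‖ : ℂ)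
        = 1 / (2 * Real.pi) := by
  intro j t ht
  set c : Fin m → ℝ → ℂ := fun k s => moebiusWeight (ζ k s - α) (deriv (ζ k) s) with hc
  have hη_inv : ∀ k s, η k s = (ζ k s - α)⁻¹ := fun k s => (hη k s).trans (one_div _)
  have hψc : ∀ k s, ψ k s = c k s * starRingEnd ℂ (S k s) := by
    intro k s
    rw [hψ, hη_inv, hη', hc]
    simp only [moebiusWeight, map_mul, map_div₀, map_neg, map_pow, map_inv₀]
    field_simp
  have hterm : ∀ k s,
      ksKernel (ζ j t) (ζ k s) (deriv (ζ j) t) (deriv (ζ k) s) * ψ k s * ‖deriv (ζ k) s‖ =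
        c j t * starRingEnd ℂ
          (ksKernel (η j t) (η k s) (η' j t) (η' k s) * S k s * ‖η' k s‖) := by
    intro k s
    have hweight := ksKernel_mul_moebiusWeight (sub_ne_zero.mpr (hα j t))
      (sub_ne_zero.mpr (hα k s)) (hreg j t) (hreg k s)
    rw [hψc, ← ksKernel_sub_const _ _ _ _ α, hη_inv, hη_inv, hη', hη']
    simp only [map_mul] at hweight ⊢
    linear_combination starRingEnd ℂ (S k s) * hweight
  have hrhs : c j t * (η' j t / (2 * Real.pi * I * ‖η' j t‖ * η j t)) = 1 / (2 * Real.pi) := by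
    rw [hη_inv, hη']
    exact moebiusWeight_mul_rhs (sub_ne_zero.mpr (hα j t)) (hreg j t)
  calc ψ j t + ∑ k, ∫ s in (0 : ℝ)..(2 * Real.pi),
        ksKernel (ζ j t) (ζ k s) (deriv (ζ j) t) (deriv (ζ k) s) * ψ k s * ‖deriv (ζ k) s‖
      = c j t * starRingEnd ℂ (S j t + ∑ k, ∫ s in (0 : ℝ)..(2 * Real.pi),
          ksKernel (η j t) (η k s) (η' j t) (η' k s) * S k s * ‖η' k s‖) := by
        rw [hψc j t, map_add, mul_add, map_sum, Finset.mul_sum]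
        congr 1
        refine Finset.sum_congr rfl fun k _ => ?_
        rw [← intervalIntegral.intervalIntegral_conj, ← intervalIntegral.integral_const_mul]
        exact intervalIntegral.integral_congr fun s _ => hterm k s
    _ = 1 / (2 * Real.pi) := by rw [hS j t ht, conj_conj, hrhs]

/-- Transformation of the Kerzman–Stein integral equation from the image boundary
`η = M ∘ ζ` (under the Möbius map `M(z) = 1/(z−α)`) back to the original boundary `ζ`:
if the boundary values `S j` of the Szegő kernel satisfy the Kerzman–Stein equation on
the image curves `η j`, then `ψ j t = i·conj(S j t · η′ j t / η j t)/‖ζ′ j t‖` satisfies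
the modified equation on the original curves, with right-hand side `1/(2π)`. -/
theorem ksKernel_integral_equation_transform (m : ℕ) (hm : 1 ≤ m) (α : ℂ)
    (ζ : Fin m → ℝ → ℂ)
    (hC1 : ∀ j, ContDiff ℝ 1 (ζ j))
    (hper : ∀ j, Function.Periodic (ζ j) (2 * Real.pi))
    (hα : ∀ j t, ζ j t ≠ α)
    (hreg : ∀ j t, deriv (ζ j) t ≠ 0)
    (hinj : ∀ j k t s, ζ j t = ζ k s → j = k ∧ ∃ n : ℤ, t - s = n * (2 * Real.pi))
    (η η' : Fin m → ℝ → ℂ)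
    (hη : ∀ j t, η j t = 1 / (ζ j t - α))
    (hη' : ∀ j t, η' j t = -(deriv (ζ j) t) / (ζ j t - α) ^ 2)
    (S : Fin m → ℝ → ℂ)
    (hScont : ∀ j, ContinuousOn (S j) (Set.Icc 0 (2 * Real.pi)))
    (hS : ∀ j, ∀ t ∈ Set.Icc (0 : ℝ) (2 * Real.pi),
      S j t + ∑ k, ∫ s in (0 : ℝ)..(2 * Real.pi),
          ksKernel (η j t) (η k s) (η' j t) (η' k s) * S k s * (‖η' k s‖ : ℂ)
        = starRingEnd ℂ (η' j t /
            (2 * Real.pi * Complex.I * (‖η' j t‖ : ℂ) * η j t)))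
    (ψ : Fin m → ℝ → ℂ)
    (hψ : ∀ j t, ψ j t =
      Complex.I * starRingEnd ℂ (S j t * η' j t / η j t) / (‖deriv (ζ j) t‖ : ℂ)) :
    ∀ j, ∀ t ∈ Set.Icc (0 : ℝ) (2 * Real.pi),
      ψ j t + ∑ k, ∫ s in (0 : ℝ)..(2 * Real.pi),
          ksKernel (ζ j t) (ζ k s) (deriv (ζ j) t) (deriv (ζ k) s) * ψ k s *
            (‖deriv (ζ k) s‖ : ℂ)
        = 1 / (2 * Real.pi) :=
  ksKernel_integral_equation_transform_general m α ζ hα hreg η η' hη hη' S hS ψ hψ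
end

section
/- Let m ≥ 1 and let closedBall(c_1, r_1), …, closedBall(c_m, r_m) ⊆ ℂ be pairwise disjoint closed disks with r_j > 0, and set E := ⋃_{j=1}^m closedBall(c_j, r_j). Then for every function f : ℂ → ℂ that is admissible for E, one has ‖f′(∞)‖ ≤ r_1 + ⋯ + r_m; consequently γ(E) ≤ Σ_{j=1}^m r_j = Σ_{j=1}^m γ(closedBall(c_j, r_j)). -/
open Filter Bornology

/-!
If `g` is holomorphic off finitely many disjoint open disks and `z * (g z - L) → a` at infinity,
then the integrals of `g` over the boundary circles add up to `2πi a`. This goes by induction on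
the number of disks. For one disk, let `T` be the Cauchy transform of `g` over its boundary
circle; on a thin annulus outside the disk, `g + T` is the Cauchy transform of `g` over the outer
circle, so `g + T` extends holomorphically across the disk. Being holomorphic off the disk, `T`
integrates to zero over the other circles, and `z * T z → -(2πi)⁻¹ ∮ g`, so `g + T` satisfies
the hypotheses with one disk fewer.

For admissible `f`, the circles of radii `rⱼ + ε` lie where `‖f‖ ≤ 1`, which gives
`‖f′(∞)‖ ≤ ∑ (rⱼ + ε)`; and `t / (z - x)` attains the bound on a single disk.
-/

open Metric Set Complex Real Topology

theorem exists_pos_le_dist_of_notMem_closedBall {X : Type*} [PseudoMetricSpace X] {c z₀ : X}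
    {R : ℝ} (hz₀ : z₀ ∉ closedBall c R) :
    ∃ δ > 0, ∀ z ∈ ball z₀ δ, ∀ w ∈ sphere c R, δ ≤ dist w z := by
  rw [mem_closedBall, not_le] at hz₀
  refine ⟨(dist z₀ c - R) / 2, by linarith, fun z hz w hw => ?_⟩
  have := dist_triangle4 z₀ z w c
  rw [mem_sphere.1 hw, dist_comm z w] at this
  rw [mem_ball, dist_comm] at hz
  linarith

theorem exists_gt_disjoint_closedBall {E : Type*} [NormedAddCommGroup E] [NormedSpace ℝ E]
    [ProperSpace E] {s : Set E} {x : E} {r : ℝ} (hs : IsClosed s) (hr : 0 ≤ r)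
    (h : Disjoint (closedBall x r) s) : ∃ R, r < R ∧ Disjoint (closedBall x R) s := by
  obtain ⟨δ, hδ, hsub⟩ := (isCompact_closedBall x r).exists_cthickening_subset_open
    hs.isOpen_compl h.subset_compl_right
  rw [cthickening_closedBall hδ.le hr] at hsub
  exact ⟨δ + r, by linarith, subset_compl_iff_disjoint_right.1 hsub⟩

theorem eventually_pairwise_disjoint_closedBall_add {ι E : Type*} [Finite ι]
    [NormedAddCommGroup E] [NormedSpace ℝ E] {c : ι → E} {r : ι → ℝ} (hr : ∀ j, 0 ≤ r j)
    (hdisj : Pairwise fun j k => Disjoint (closedBall (c j) (r j)) (closedBall (c k) (r k))) :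
    ∀ᶠ ε in 𝓝 (0 : ℝ),
      Pairwise fun j k => Disjoint (closedBall (c j) (r j + ε)) (closedBall (c k) (r k + ε)) := by
  refine eventually_all.2 fun j => eventually_all.2 fun k => ?_
  rcases eq_or_ne j k with rfl | hjk
  · exact Eventually.of_forall fun _ h => absurd rfl h
  · have hgap := (disjoint_closedBall_closedBall_iff (hr j) (hr k)).1 (hdisj hjk)
    filter_upwards [eventually_lt_nhds (show (0 : ℝ) < (dist (c j) (c k) - r j - r k) / 2 by
      linarith)] with ε hε _
    exact closedBall_disjoint_closedBall (by linarith)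

theorem sphere_subset_compl_biUnion_ball {ι X : Type*} [PseudoMetricSpace X] {c : ι → X}
    {r : ι → ℝ} {t : Finset ι}
    (hdisj : (t : Set ι).PairwiseDisjoint fun j => closedBall (c j) (r j)) {j : ι} (hj : j ∈ t) :
    sphere (c j) (r j) ⊆ (⋃ k ∈ t, ball (c k) (r k))ᶜ := by
  intro w hw
  simp only [mem_compl_iff, mem_iUnion, not_exists]
  intro k hk hwk
  rcases eq_or_ne j k with rfl | hjk
  · exact (mem_ball.1 hwk).ne (mem_sphere.1 hw)
  · exact disjoint_left.1 (hdisj hj hk hjk) (sphere_subset_closedBall hw)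
      (ball_subset_closedBall hwk)

theorem circleIntegral_sub_inv_of_notMem_closedBall {c z : ℂ} {r : ℝ} (hr : 0 ≤ r)
    (hz : z ∉ closedBall c r) : (∮ w in C(c, r), (w - z)⁻¹) = 0 :=
  DiffContOnCl.circleIntegral_eq_zero hr <| DifferentiableOn.diffContOnCl_ball (U := {z}ᶜ)
    (fun _ hw => ((differentiableAt_id.sub_const z).inv (sub_ne_zero.2 hw)).differentiableWithinAt)
    fun _ hw h => hz (h ▸ hw)

theorem circleIntegral_dslope {g : ℂ → ℂ} {c z : ℂ} {ρ : ℝ} (hρ : 0 ≤ ρ)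
    (hg : ContinuousOn g (sphere c ρ)) (hz : z ∉ sphere c ρ) :
    (∮ w in C(c, ρ), dslope g z w) =
      (∮ w in C(c, ρ), (w - z)⁻¹ * g w) - (∮ w in C(c, ρ), (w - z)⁻¹) * g z := by
  have hne : ∀ w ∈ sphere c ρ, w - z ≠ 0 := fun w hw h => hz (sub_eq_zero.1 h ▸ hw)
  have hinv : ContinuousOn (fun w => (w - z)⁻¹) (sphere c ρ) :=
    (continuousOn_id.sub continuousOn_const).inv₀ hne
  rw [← smul_eq_mul _ (g z), ← circleIntegral.integral_smul_const,
    ← circleIntegral.integral_sub (f := fun w => (w - z)⁻¹ * g w)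
      (g := fun w => (w - z)⁻¹ • g z) ((hinv.mul hg).circleIntegrable hρ)
      ((hinv.smul continuousOn_const).circleIntegrable hρ)]
  refine circleIntegral.integral_congr hρ fun w hw => ?_
  rw [dslope_of_ne _ (sub_ne_zero.1 (hne w hw)), slope_def_field, smul_eq_mul]
  have := hne w hw
  field_simp

noncomputable def cauchyTransform (g : ℂ → ℂ) (c : ℂ) (R : ℝ) (z : ℂ) : ℂ :=
  (2 * π * I)⁻¹ * ∮ w in C(c, R), (w - z)⁻¹ * g w

section CauchyTransform

variable {g : ℂ → ℂ} {c : ℂ} {R : ℝ}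

theorem differentiableOn_cauchyTransform_ball (hR : 0 < R) (hg : CircleIntegrable g c R) :
    DifferentiableOn ℂ (cauchyTransform g c R) (ball c R) := by
  lift R to NNReal using hR.le
  have := (hasFPowerSeriesOn_cauchy_integral hg (mod_cast hR)).differentiableOn
  rwa [Metric.eball_coe] at this

theorem differentiableAt_cauchyTransform (hR : 0 ≤ R) (hg : ContinuousOn g (sphere c R))
    {z₀ : ℂ} (hz₀ : z₀ ∉ closedBall c R) :
    DifferentiableAt ℂ (cauchyTransform g c R) z₀ := by
  obtain ⟨C, hC⟩ := (isCompact_sphere c R).exists_bound_of_continuousOn hg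
  obtain ⟨δ, hδ₀, hdist⟩ := exists_pos_le_dist_of_notMem_closedBall hz₀
  have hsep : ∀ z ∈ ball z₀ δ, ∀ θ, δ ≤ ‖circleMap c R θ - z‖ := fun z hz θ =>
    dist_eq_norm (circleMap c R θ) z ▸ hdist z hz _ (circleMap_mem_sphere c hR θ)
  have hne : ∀ z ∈ ball z₀ δ, ∀ θ, circleMap c R θ - z ≠ 0 := fun z hz θ =>
    norm_pos_iff.1 (hδ₀.trans_le (hsep z hz θ))
  have hgc : Continuous fun θ => g (circleMap c R θ) :=
    hg.comp_continuous (continuous_circleMap c R) (circleMap_mem_sphere c hR)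
  -- `k z 1` is the integrand of `cauchyTransform g c R z`, and `k z 2` its derivative in `z`.
  set k : ℂ → ℕ → ℝ → ℂ := fun z n θ =>
    deriv (circleMap c R) θ • (((circleMap c R θ - z) ^ n)⁻¹ * g (circleMap c R θ))
  have hk : ∀ z ∈ ball z₀ δ, ∀ n, Continuous (k z n) := by
    intro z hz n
    simp only [k, deriv_circleMap]
    exact ((continuous_circleMap 0 R).mul continuous_const).smul
      (((((continuous_circleMap c R).sub continuous_const).pow n).inv₀
        (fun θ => pow_ne_zero n (hne z hz θ))).mul hgc)
  have hz₀δ : z₀ ∈ ball z₀ δ := mem_ball_self hδ₀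
  have key := intervalIntegral.hasDerivAt_integral_of_dominated_loc_of_deriv_le
    (μ := MeasureTheory.volume) (a := 0) (b := 2 * π) (F := fun z => k z 1)
    (F' := fun z => k z 2) (bound := fun _ => R * ((δ ^ 2)⁻¹ * C)) (ball_mem_nhds z₀ hδ₀)
    (eventually_of_mem (ball_mem_nhds z₀ hδ₀) fun z hz => (hk z hz 1).aestronglyMeasurable)
    ((hk z₀ hz₀δ 1).intervalIntegrable _ _) (hk z₀ hz₀δ 2).aestronglyMeasurable
    (Eventually.of_forall fun θ _ z hz => by
      simp only [k, deriv_circleMap, norm_smul, norm_mul, norm_circleMap_zero, norm_I, norm_inv,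
        norm_pow, abs_of_nonneg hR, mul_one]
      gcongr
      exacts [hsep z hz θ, hC _ (circleMap_mem_sphere c hR θ)])
    intervalIntegrable_const
    (Eventually.of_forall fun θ _ z hz => by
      have := ((hasDerivAt_const z (circleMap c R θ)).sub (hasDerivAt_id z)).inv (hne z hz θ)
      convert (this.mul_const (g (circleMap c R θ))).const_smul (deriv (circleMap c R) θ) using 1
      · ext; simp [k]
      · simp [k, div_eq_mul_inv])
  have hT : cauchyTransform g c R = fun z => (2 * π * I)⁻¹ * ∫ θ in 0..2 * π, k z 1 θ := by
    ext z
    simp only [cauchyTransform, circleIntegral, k, pow_one]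
  rw [hT]
  exact key.2.differentiableAt.const_mul _

theorem mul_cauchyTransform_add_eq (hR : 0 ≤ R) (hg : ContinuousOn g (sphere c R)) {z : ℂ}
    (hz : z ∉ sphere c R) :
    z * cauchyTransform g c R z + (2 * π * I)⁻¹ * ∮ w in C(c, R), g w =
      (2 * π * I)⁻¹ • ∮ w in C(c, R), w * (w - z)⁻¹ * g w := by
  have hne : ∀ w ∈ sphere c R, w - z ≠ 0 := fun w hw h => hz (sub_eq_zero.1 h ▸ hw)
  have hk : ContinuousOn (fun w => z * ((w - z)⁻¹ * g w)) (sphere c R) :=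
    continuousOn_const.mul (((continuousOn_id.sub continuousOn_const).inv₀ hne).mul hg)
  rw [cauchyTransform, ← mul_assoc, mul_comm z, mul_assoc, ← circleIntegral.integral_const_mul,
    ← mul_add, ← circleIntegral.integral_add (hk.circleIntegrable hR) (hg.circleIntegrable hR),
    smul_eq_mul, circleIntegral.integral_congr hR fun w hw => ?_]
  have := hne w hw
  field_simp
  ring

theorem tendsto_mul_cauchyTransform_cobounded (hR : 0 ≤ R) (hg : ContinuousOn g (sphere c R)) :
    Tendsto (fun z => z * cauchyTransform g c R z) (cobounded ℂ)
      (𝓝 (-((2 * π * I)⁻¹ * ∮ w in C(c, R), g w))) := by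
  obtain ⟨C, hC⟩ := (isCompact_sphere c R).exists_bound_of_continuousOn hg
  set M := ‖c‖ + R
  have hM : ∀ w ∈ sphere c R, ‖w‖ ≤ M := fun w hw => by
    have := norm_le_norm_add_norm_sub' w c
    rwa [← dist_eq_norm, mem_sphere.1 hw] at this
  rw [← tendsto_sub_nhds_zero_iff]
  refine squeeze_zero_norm' (a := fun z => R * (M * C) / (‖z‖ - M)) ?_ ?_
  · filter_upwards [tendsto_norm_cobounded_atTop.eventually_gt_atTop M] with z hz
    have hsep : ∀ w ∈ sphere c R, ‖z‖ - M ≤ ‖w - z‖ := fun w hw => by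
      have := norm_sub_norm_le z w
      rw [norm_sub_rev] at this
      linarith [hM w hw]
    have hzR : z ∉ sphere c R := fun h => by linarith [hM z h]
    rw [sub_neg_eq_add, mul_cauchyTransform_add_eq hR hg hzR]
    refine (circleIntegral.norm_two_pi_i_inv_smul_integral_le_of_norm_le_const hR
      (C := M * (‖z‖ - M)⁻¹ * C) fun w hw => ?_).trans_eq (by ring)
    rw [norm_mul, norm_mul, norm_inv]
    have := hsep w hw
    have : 0 < ‖z‖ - M := by linarith
    gcongr
    exacts [hM w hw, hC w hw]
  · refine tendsto_const_nhds.div_atTop ?_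
    simpa [sub_eq_add_neg] using tendsto_atTop_add_const_right _ (-M) tendsto_norm_cobounded_atTop

theorem cauchyTransform_eq_add_cauchyTransform {r : ℝ} (hr : 0 < r) (hrR : r ≤ R)
    (hg : DifferentiableOn ℂ g (closedBall c R \ ball c r)) {z : ℂ}
    (hz : z ∈ ball c R \ closedBall c r) :
    cauchyTransform g c R z = g z + cauchyTransform g c r z := by
  have hopen : IsOpen (ball c R \ closedBall c r) := isOpen_ball.sdiff isClosed_closedBall
  have hsub : ball c R \ closedBall c r ⊆ closedBall c R \ ball c r :=
    sdiff_subset_sdiff ball_subset_closedBall ball_subset_closedBall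
  have hd : ∀ x ∈ ball c R \ closedBall c r, DifferentiableAt ℂ g x := fun x hx =>
    hg.differentiableAt (mem_of_superset (hopen.mem_nhds hx) hsub)
  -- `dslope g z` has no pole at `z`, so Cauchy's theorem on the annulus applies to it.
  have hslope : (∮ w in C(c, R), dslope g z w) = ∮ w in C(c, r), dslope g z w :=
    circleIntegral_eq_of_differentiable_on_annulus_off_countable hr hrR (countable_singleton z)
      ((continuousOn_dslope (mem_of_superset (hopen.mem_nhds hz) hsub)).2
        ⟨hg.continuousOn, hd z hz⟩)
      fun x hx => (differentiableAt_dslope_of_ne (by simpa using hx.2)).2 (hd x hx.1)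
  have hzR : z ∉ sphere c R := fun h => (mem_ball.1 hz.1).ne (mem_sphere.1 h)
  have hzr : z ∉ sphere c r := fun h => hz.2 (sphere_subset_closedBall h)
  have hsphR : sphere c R ⊆ closedBall c R \ ball c r := fun w hw =>
    ⟨sphere_subset_closedBall hw, by simp [mem_sphere.1 hw, hrR]⟩
  have hsphr : sphere c r ⊆ closedBall c R \ ball c r := fun w hw =>
    ⟨closedBall_subset_closedBall hrR (sphere_subset_closedBall hw), by simp [mem_sphere.1 hw]⟩
  rw [circleIntegral_dslope (hr.le.trans hrR) (hg.continuousOn.mono hsphR) hzR,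
    circleIntegral_dslope hr.le (hg.continuousOn.mono hsphr) hzr,
    circleIntegral.integral_sub_inv_of_mem_ball hz.1,
    circleIntegral_sub_inv_of_notMem_closedBall hr.le hz.2] at hslope
  rw [cauchyTransform, cauchyTransform, sub_eq_iff_eq_add.1 hslope, zero_mul, sub_zero]
  field_simp [two_pi_I_ne_zero]
  ring

theorem circleIntegral_add_cauchyTransform {c' : ℂ} {r' : ℝ} (hR : 0 ≤ R) (hr' : 0 ≤ r')
    (hg : ContinuousOn g (sphere c R)) (hg' : ContinuousOn g (sphere c' r'))
    (hdisj : Disjoint (closedBall c' r') (closedBall c R)) :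
    (∮ z in C(c', r'), (g z + cauchyTransform g c R z)) = ∮ z in C(c', r'), g z := by
  have hT : DifferentiableOn ℂ (cauchyTransform g c R) (closedBall c R)ᶜ := fun z hz =>
    (differentiableAt_cauchyTransform hR hg hz).differentiableWithinAt
  rw [circleIntegral.integral_add (hg'.circleIntegrable hr')
      (hT.continuousOn.mono ((sphere_subset_closedBall).trans hdisj.subset_compl_right)
        |>.circleIntegrable hr'),
    DiffContOnCl.circleIntegral_eq_zero hr' (hT.diffContOnCl_ball hdisj.subset_compl_right),
    add_zero]

end CauchyTransform

theorem exists_differentiableOn_eqOn_add_cauchyTransform {g : ℂ → ℂ} {s : Set ℂ} {c : ℂ}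
    {r R : ℝ} (hr : 0 < r) (hrR : r < R) (hs : Disjoint (closedBall c R) s)
    (hg : DifferentiableOn ℂ g (ball c r ∪ s)ᶜ) :
    ∃ h : ℂ → ℂ, DifferentiableOn ℂ h sᶜ ∧
      EqOn h (fun z => g z + cauchyTransform g c r z) (closedBall c r)ᶜ := by
  classical
  have hann : DifferentiableOn ℂ g (closedBall c R \ ball c r) :=
    hg.mono fun w hw => by
      simpa [hw.2] using fun hws => hs.ne_of_mem hw.1 hws rfl
  have hsph : ∀ ρ, r ≤ ρ → ρ ≤ R → ContinuousOn g (sphere c ρ) := fun ρ hrρ hρR =>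
    hann.continuousOn.mono fun w hw =>
      ⟨closedBall_subset_closedBall hρR (sphere_subset_closedBall hw), by
        simp [mem_sphere.1 hw, hrρ]⟩
  set h := fun z => if z ∈ ball c R then cauchyTransform g c R z
    else g z + cauchyTransform g c r z
  have heq : EqOn h (fun z => g z + cauchyTransform g c r z) (closedBall c r)ᶜ := by
    intro z hz
    by_cases hzR : z ∈ ball c R
    · simpa only [h, if_pos hzR] using
        cauchyTransform_eq_add_cauchyTransform hr hrR.le hann ⟨hzR, hz⟩
    · simp only [h, if_neg hzR]
  refine ⟨h, fun z hz => ?_, heq⟩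
  by_cases hzR : z ∈ ball c R
  · have hT := differentiableOn_cauchyTransform_ball (hr.trans hrR)
      ((hsph R hrR.le le_rfl).circleIntegrable (hr.trans hrR).le)
    refine ((hT.differentiableAt (isOpen_ball.mem_nhds hzR)).congr_of_eventuallyEq ?_)
      |>.differentiableWithinAt
    filter_upwards [isOpen_ball.mem_nhds hzR] with w hw
    simp only [h, if_pos hw]
  · have hzr : z ∈ (closedBall c r)ᶜ := fun h => hzR (closedBall_subset_ball hrR h)
    have hnhds : (closedBall c r)ᶜ ∈ 𝓝 z := isClosed_closedBall.isOpen_compl.mem_nhds hzr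
    have hball : (ball c r)ᶜ ∈ 𝓝 z :=
      mem_of_superset hnhds (compl_subset_compl.2 ball_subset_closedBall)
    have hgz : DifferentiableWithinAt ℂ g sᶜ z := by
      rw [compl_union] at hg
      exact (hg z ⟨mem_of_mem_nhds hball, hz⟩).mono_of_mem_nhdsWithin
        (inter_mem (mem_nhdsWithin_of_mem_nhds hball) self_mem_nhdsWithin)
    exact (hgz.add (differentiableAt_cauchyTransform hr.le (hsph r le_rfl hrR.le) hzr
      |>.differentiableWithinAt)).congr_of_eventuallyEq
      (Filter.EventuallyEq.filter_mono (heq.eventuallyEq_of_mem hnhds) nhdsWithin_le_nhds) (heq hzr)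

theorem eq_zero_of_differentiable_of_tendsto_mul_sub {g : ℂ → ℂ} {L a : ℂ}
    (hg : Differentiable ℂ g) (ha : Tendsto (fun z => z * (g z - L)) (cobounded ℂ) (𝓝 a)) :
    a = 0 := by
  have hL : Tendsto g (cocompact ℂ) (𝓝 L) := by
    rw [← Metric.cobounded_eq_cocompact, ← tendsto_sub_nhds_zero_iff]
    have := ha.mul tendsto_inv₀_cobounded
    rw [mul_zero] at this
    refine this.congr' ?_
    filter_upwards [eventually_ne_cobounded 0] with z hz
    field_simp
  have hconst := hg.eq_const_of_tendsto_cocompact hL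
  refine tendsto_nhds_unique ha ?_
  simp [hconst]

theorem sum_circleIntegral_eq_two_pi_I_mul {ι : Type*} {c : ι → ℂ} {r : ι → ℝ} {t : Finset ι}
    (hr : ∀ j ∈ t, 0 < r j)
    (hdisj : (t : Set ι).PairwiseDisjoint fun j => closedBall (c j) (r j))
    {g : ℂ → ℂ} {L a : ℂ} (hg : DifferentiableOn ℂ g (⋃ j ∈ t, ball (c j) (r j))ᶜ)
    (ha : Tendsto (fun z => z * (g z - L)) (cobounded ℂ) (𝓝 a)) :
    ∑ j ∈ t, ∮ z in C(c j, r j), g z = 2 * π * I * a := by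
  classical
  induction t using Finset.induction_on generalizing g a with
  | empty =>
    simp only [Finset.notMem_empty, iUnion_of_empty, iUnion_empty, compl_empty,
      differentiableOn_univ] at hg
    simp [eq_zero_of_differentiable_of_tendsto_mul_sub hg ha]
  | insert i t hi ih =>
    have hgc : ∀ j ∈ insert i t, ContinuousOn g (sphere (c j) (r j)) := fun j hj =>
      hg.continuousOn.mono (sphere_subset_compl_biUnion_ball hdisj hj)
    have hgi := hgc i (Finset.mem_insert_self i t)
    have hri : 0 < r i := hr i (Finset.mem_insert_self i t)
    rw [Finset.coe_insert, pairwiseDisjoint_insert] at hdisj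
    have hfar : ∀ j ∈ t, Disjoint (closedBall (c j) (r j)) (closedBall (c i) (r i)) :=
      fun j hj => (hdisj.2 j hj (ne_of_mem_of_not_mem hj hi).symm).symm
    obtain ⟨R, hrR, hRK⟩ := exists_gt_disjoint_closedBall
      (isClosed_biUnion_finset fun j _ => isClosed_closedBall) hri.le
      (disjoint_iUnion₂_right.2 fun j hj => (hfar j hj).symm)
    rw [Finset.set_biUnion_insert] at hg
    obtain ⟨h, hh, hhg⟩ := exists_differentiableOn_eqOn_add_cauchyTransform hri hrR
      (hRK.mono_right (iUnion₂_mono fun j _ => ball_subset_closedBall)) hg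
    have hcirc : ∀ j ∈ t, ∮ z in C(c j, r j), h z = ∮ z in C(c j, r j), g z := fun j hj => by
      have hrj := (hr j (Finset.mem_insert_of_mem hj)).le
      rw [circleIntegral.integral_congr hrj
        (hhg.mono (sphere_subset_closedBall.trans (hfar j hj).subset_compl_right))]
      exact circleIntegral_add_cauchyTransform hri.le hrj hgi
        (hgc j (Finset.mem_insert_of_mem hj)) (hfar j hj)
    have hlim : Tendsto (fun z => z * (h z - L)) (cobounded ℂ)
        (𝓝 (a + -((2 * π * I)⁻¹ * ∮ z in C(c i, r i), g z))) := by
      refine (ha.add (tendsto_mul_cauchyTransform_cobounded hri.le hgi)).congr' ?_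
      filter_upwards [isBounded_def.1 (isBounded_closedBall (x := c i) (r := r i))] with z hz
      rw [hhg hz]
      ring
    rw [Finset.sum_insert hi, ← Finset.sum_congr rfl hcirc,
      ih (fun j hj => hr j (Finset.mem_insert_of_mem hj)) hdisj.1 hh hlim]
    field_simp [two_pi_I_ne_zero]
    ring

theorem norm_le_mul_sum_of_tendsto_mul_sub {ι : Type*} {c : ι → ℂ} {r : ι → ℝ} {t : Finset ι}
    (hr : ∀ j ∈ t, 0 < r j) (hdisj : (t : Set ι).PairwiseDisjoint fun j => closedBall (c j) (r j))
    {g : ℂ → ℂ} {L a : ℂ} {M : ℝ} (hg : DifferentiableOn ℂ g (⋃ j ∈ t, ball (c j) (r j))ᶜ)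
    (hM : ∀ j ∈ t, ∀ z ∈ sphere (c j) (r j), ‖g z‖ ≤ M)
    (ha : Tendsto (fun z => z * (g z - L)) (cobounded ℂ) (𝓝 a)) :
    ‖a‖ ≤ M * ∑ j ∈ t, r j := by
  refine le_of_mul_le_mul_left ?_ two_pi_pos
  calc 2 * π * ‖a‖ = ‖∑ j ∈ t, ∮ z in C(c j, r j), g z‖ := by
        rw [sum_circleIntegral_eq_two_pi_I_mul hr hdisj hg ha]
        simp [abs_of_pos pi_pos]
    _ ≤ ∑ j ∈ t, 2 * π * r j * M := (norm_sum_le _ _).trans <| Finset.sum_le_sum fun j hj =>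
        circleIntegral.norm_integral_le_of_norm_le_const (hr j hj).le (hM j hj)
    _ = 2 * π * (M * ∑ j ∈ t, r j) := by
        rw [Finset.mul_sum, Finset.mul_sum]
        exact Finset.sum_congr rfl fun j _ => by ring

theorem Admissible.norm_le_sum_radius {ι : Type*} [Fintype ι] {c : ι → ℂ} {r : ι → ℝ}
    (hr : ∀ j, 0 ≤ r j)
    (hdisj : Pairwise fun j k => Disjoint (closedBall (c j) (r j)) (closedBall (c k) (r k)))
    {f : ℂ → ℂ} {L d : ℂ} (hf : Admissible (⋃ j, closedBall (c j) (r j)) f L d) :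
    ‖d‖ ≤ ∑ j, r j := by
  obtain ⟨hdiff, hbound, -, hd⟩ := hf
  have hε : ∀ᶠ ε in 𝓝[>] (0 : ℝ), ‖d‖ ≤ ∑ j, (r j + ε) := by
    filter_upwards [self_mem_nhdsWithin,
      nhdsWithin_le_nhds (eventually_pairwise_disjoint_closedBall_add hr hdisj)]
      with ε (hε : 0 < ε) hdisjε
    have hpos : ∀ j, 0 < r j + ε := fun j => add_pos_of_nonneg_of_pos (hr j) hε
    have hsub : (⋃ j, closedBall (c j) (r j)) ⊆ ⋃ j ∈ Finset.univ, ball (c j) (r j + ε) := by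
      simpa using iUnion_mono fun j => closedBall_subset_ball (lt_add_of_pos_right (r j) hε)
    have hsph : ∀ j, sphere (c j) (r j + ε) ⊆ (⋃ j, closedBall (c j) (r j))ᶜ := by
      intro j w hw
      simp only [mem_compl_iff, mem_iUnion, not_exists]
      intro k hk
      rcases eq_or_ne j k with rfl | hjk
      · linarith [mem_sphere.1 hw, mem_closedBall.1 hk]
      · exact disjoint_left.1 (hdisjε hjk) (sphere_subset_closedBall hw)
          (closedBall_subset_closedBall (le_add_of_nonneg_right hε.le) hk)
    simpa using norm_le_mul_sum_of_tendsto_mul_sub (t := Finset.univ) (fun j _ => hpos j)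
      (hdisjε.set_pairwise _) (hdiff.mono (compl_subset_compl.2 hsub))
      (fun j _ z hz => hbound z (hsph j hz)) hd
  refine ge_of_tendsto ?_ hε
  have : Tendsto (fun ε : ℝ => ∑ j, (r j + ε)) (𝓝 0) (𝓝 (∑ j, (r j + 0))) :=
    tendsto_finsetSum _ fun j _ => tendsto_const_nhds.add tendsto_id
  simpa using this.mono_left nhdsWithin_le_nhds

theorem analyticCapacity_le {E : Set ℂ} {C : ℝ} (hC : 0 ≤ C)
    (h : ∀ f L d, Admissible E f L d → ‖d‖ ≤ C) : analyticCapacity E ≤ C :=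
  Real.sSup_le (by rintro _ ⟨f, L, d, hf, rfl⟩; exact h f L d hf) hC

theorem Admissible.norm_le_analyticCapacity {E : Set ℂ} {f : ℂ → ℂ} {L d : ℂ} {C : ℝ}
    (h : ∀ f L d, Admissible E f L d → ‖d‖ ≤ C) (hf : Admissible E f L d) :
    ‖d‖ ≤ analyticCapacity E :=
  le_csSup ⟨C, by rintro _ ⟨f, L, d, hf, rfl⟩; exact h f L d hf⟩ ⟨f, L, d, hf, rfl⟩

theorem admissible_closedBall (x : ℂ) {t : ℝ} (ht : 0 ≤ t) :
    Admissible (closedBall x t) (fun z => t * (z - x)⁻¹) 0 t := by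
  have hinv : Tendsto (fun z => (z - x)⁻¹) (cobounded ℂ) (𝓝 0) :=
    tendsto_inv₀_cobounded.comp (tendsto_sub_const_cobounded x)
  refine ⟨fun z hz => ?_, fun z hz => ?_, ?_, ?_⟩
  · have : z - x ≠ 0 := sub_ne_zero.2 fun h => hz (h ▸ mem_closedBall_self ht)
    exact ((differentiableAt_id.sub_const x).inv this).const_mul _ |>.differentiableWithinAt
  · have : t < ‖z - x‖ := by simpa [dist_eq_norm] using hz
    rw [norm_mul, norm_inv, Complex.norm_real, Real.norm_of_nonneg ht]
    exact mul_inv_le_one_of_le₀ this.le (norm_nonneg _)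
  · simpa using hinv.const_mul (t : ℂ)
  · have : Tendsto (fun z => (t : ℂ) + t * x * (z - x)⁻¹) (cobounded ℂ) (𝓝 t) := by
      simpa using (hinv.const_mul (t * x : ℂ)).const_add (t : ℂ)
    refine this.congr' ?_
    filter_upwards [eventually_ne_cobounded x] with z hz
    have : z - x ≠ 0 := sub_ne_zero.2 hz
    field_simp
    ring

theorem analyticCapacity_closedBall (x : ℂ) {t : ℝ} (ht : 0 ≤ t) :
    analyticCapacity (closedBall x t) = t := by
  have hbound : ∀ f L d, Admissible (closedBall x t) f L d → ‖d‖ ≤ t := fun f L d hf => by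
    simpa using Admissible.norm_le_sum_radius (ι := Unit) (c := fun _ => x) (r := fun _ => t)
      (fun _ => ht) Subsingleton.pairwise (by rwa [iUnion_const])
  refine le_antisymm (analyticCapacity_le ht hbound) ?_
  simpa [abs_of_nonneg ht] using (admissible_closedBall x ht).norm_le_analyticCapacity hbound

theorem analyticCapacity_union_disks_le_general (m : ℕ) (c : Fin m → ℂ)
    (r : Fin m → ℝ) (hr : ∀ j, 0 < r j)
    (hdisj : Pairwise fun j k =>
      Disjoint (Metric.closedBall (c j) (r j)) (Metric.closedBall (c k) (r k))) :
    (∀ f L d, Admissible (⋃ j, Metric.closedBall (c j) (r j)) f L d → ‖d‖ ≤ ∑ j, r j) ∧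
      analyticCapacity (⋃ j, Metric.closedBall (c j) (r j)) ≤ ∑ j, r j ∧
      ∑ j, r j = ∑ j, analyticCapacity (Metric.closedBall (c j) (r j)) := by
  have hbound : ∀ f L d, Admissible (⋃ j, closedBall (c j) (r j)) f L d → ‖d‖ ≤ ∑ j, r j :=
    fun _ _ _ hf => hf.norm_le_sum_radius (fun j => (hr j).le) hdisj
  exact ⟨hbound, analyticCapacity_le (Finset.sum_nonneg fun j _ => (hr j).le) hbound,
    Finset.sum_congr rfl fun j _ => (analyticCapacity_closedBall (c j) (hr j).le).symm⟩

/-- For a finite union `E` of pairwise disjoint closed disks of radii `r j > 0`, every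
admissible function satisfies `‖f′(∞)‖ ≤ ∑ r j`; consequently
`γ(E) ≤ ∑ r j = ∑ γ(closedBall (c j) (r j))`. -/
theorem analyticCapacity_union_disks_le (m : ℕ) (hm : 1 ≤ m) (c : Fin m → ℂ)
    (r : Fin m → ℝ) (hr : ∀ j, 0 < r j)
    (hdisj : Pairwise fun j k =>
      Disjoint (Metric.closedBall (c j) (r j)) (Metric.closedBall (c k) (r k))) :
    (∀ f L d, Admissible (⋃ j, Metric.closedBall (c j) (r j)) f L d → ‖d‖ ≤ ∑ j, r j) ∧
      analyticCapacity (⋃ j, Metric.closedBall (c j) (r j)) ≤ ∑ j, r j ∧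
      ∑ j, r j = ∑ j, analyticCapacity (Metric.closedBall (c j) (r j)) :=
  analyticCapacity_union_disks_le_general m c r hr hdisj
end
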